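/- If Ψ ∈ S(ℝ^{n+k}) is nonzero and satisfies ÃΨ = λΨ for some λ ∈ ℂ, then there exists χ ∈ S(ℝᵏ) such that T*_{Ŝ,χ}Ψ ≠ 0; consequently λ is an eigenvalue of A, with eigenfunction T*_{Ŝ,χ}Ψ ∈ S(ℝⁿ). In particular the eigenvalues of A and of Ã coincide. -/

import Mathlib

/-!
Pick a point `(x₀, y₀)` where `ŜΨ` does not vanish and let `χ` be the slice `y ↦ (ŜΨ)(x₀, y)`,
a nonzero Schwartz function. Then `(T*_{Ŝ,χ}Ψ)(x₀) = ∫ |χ|² ≠ 0`, and the intertwining relation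
carries the eigenvalue equation of `Ψ` over to `T*_{Ŝ,χ}Ψ`.
-/

open MeasureTheory Complex SchwartzMap
open scoped ComplexConjugate

theorem antilipschitzWith_prodMk_left {α β : Type*} [PseudoMetricSpace α] [PseudoMetricSpace β]
    (x : α) : AntilipschitzWith 1 (fun y : β ↦ (x, y)) :=
  AntilipschitzWith.of_le_mul_dist fun y y' ↦ by simp [Prod.dist_eq]

theorem hasTemperateGrowth_prodMk_left {E F : Type*} [NormedAddCommGroup E] [NormedSpace ℝ E]
    [NormedAddCommGroup F] [NormedSpace ℝ F] (x : E) :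
    (fun y : F ↦ (x, y)).HasTemperateGrowth := by
  convert (Function.HasTemperateGrowth.const (x, (0 : F))).add
    (ContinuousLinearMap.inr ℝ E F).hasTemperateGrowth using 1
  ext y <;> simp

namespace SchwartzMap

variable (𝕜 : Type*) {E F V : Type*} [RCLike 𝕜] [NormedAddCommGroup E] [NormedSpace ℝ E]
  [NormedAddCommGroup F] [NormedSpace ℝ F] [NormedAddCommGroup V] [NormedSpace ℝ V]
  [NormedSpace 𝕜 V]

noncomputable def slice (x : E) : 𝓢(E × F, V) →L[𝕜] 𝓢(F, V) :=
  compCLMOfAntilipschitz 𝕜 (hasTemperateGrowth_prodMk_left x) (antilipschitzWith_prodMk_left x)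

end SchwartzMap

theorem SchwartzMap.integral_conj_mul_self_ne_zero {E : Type*} [NormedAddCommGroup E]
    [NormedSpace ℝ E] [FiniteDimensional ℝ E] [MeasurableSpace E] [BorelSpace E]
    (μ : Measure E) [μ.HasTemperateGrowth] [μ.IsOpenPosMeasure] {f : 𝓢(E, ℂ)} (hf : f ≠ 0) :
    ∫ x, conj (f x) * f x ∂μ ≠ 0 := by
  simp_rw [← RCLike.inner_apply' (𝕜 := ℂ), ← inner_toL2_toL2_eq f f μ, inner_self_ne_zero]
  exact fun h ↦ hf (injective_toLp 2 μ (h.trans (map_zero (toLpCLM ℂ ℂ 2 μ)).symm))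

theorem stmt6 (n k : ℕ)
    -- `Ŝ` : a unitary operator mapping `S(ℝ^{n+k})` into itself, together with `Ŝ⁻¹`
    (Sh : 𝓢((Fin n → ℝ) × (Fin k → ℝ), ℂ) ≃L[ℂ] 𝓢((Fin n → ℝ) × (Fin k → ℝ), ℂ))
    -- the adjoint intertwiners `T*_{Ŝ,χ}`, mapping `S(ℝ^{n+k})` into `S(ℝⁿ)`:
    (Tstar : 𝓢(Fin k → ℝ, ℂ) → 𝓢((Fin n → ℝ) × (Fin k → ℝ), ℂ) → 𝓢(Fin n → ℝ, ℂ))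
    -- `(T*_{Ŝ,χ}Φ)(x) = ∫ conj(χ(y)) (ŜΦ)(x,y) dy`
    (hTstar : ∀ (χ : 𝓢(Fin k → ℝ, ℂ)) (Φ : 𝓢((Fin n → ℝ) × (Fin k → ℝ), ℂ))
      (x : Fin n → ℝ), Tstar χ Φ x = ∫ y : Fin k → ℝ, conj (χ y) * Sh Φ (x, y))
    (A : 𝓢(Fin n → ℝ, ℂ) →L[ℂ] 𝓢(Fin n → ℝ, ℂ))
    (Atil : 𝓢((Fin n → ℝ) × (Fin k → ℝ), ℂ) →L[ℂ] 𝓢((Fin n → ℝ) × (Fin k → ℝ), ℂ))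
    -- the intertwining relation `T*_{Ŝ,χ} ∘ Ã = A ∘ T*_{Ŝ,χ}`
    (hint : ∀ (χ : 𝓢(Fin k → ℝ, ℂ)) (Φ : 𝓢((Fin n → ℝ) × (Fin k → ℝ), ℂ)),
      Tstar χ (Atil Φ) = A (Tstar χ Φ))
    (Ψ : 𝓢((Fin n → ℝ) × (Fin k → ℝ), ℂ)) (hΨ : Ψ ≠ 0) (lam : ℂ)
    (heig : Atil Ψ = lam • Ψ) :
    ∃ χ : 𝓢(Fin k → ℝ, ℂ), Tstar χ Ψ ≠ 0 ∧ A (Tstar χ Ψ) = lam • Tstar χ Ψ := by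
  obtain ⟨⟨x₀, y₀⟩, hx₀y₀⟩ : ∃ p, Sh Ψ p ≠ 0 := by
    simpa using DFunLike.ne_iff.mp ((map_ne_zero_iff Sh Sh.injective).mpr hΨ)
  set χ := slice ℂ x₀ (Sh Ψ)
  have hχ : χ ≠ 0 := DFunLike.ne_iff.mpr ⟨y₀, hx₀y₀⟩
  have hTstar_smul : Tstar χ (lam • Ψ) = lam • Tstar χ Ψ := by
    ext x
    simp [hTstar, ← integral_const_mul, mul_left_comm]
  refine ⟨χ, fun h ↦ integral_conj_mul_self_ne_zero volume hχ ?_, ?_⟩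
  · exact (hTstar χ Ψ x₀).symm.trans congr($h x₀)
  · rw [← hint, heig, hTstar_smul]
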